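/- arXiv:2508.11363 — 7 statements merged into one kernel-verified Lean document; each statement's English description precedes it below -/
import Mathlib

section
/- Let π* : 𝒜 → ℝ be the Gibbs distribution π*(a) = exp((β/α)·Q(a)) / Σ_{a'∈𝒜} exp((β/α)·Q(a')). Then π* uniquely minimizes the preference loss over full-support probability distributions: for every π : 𝒜 → ℝ with π(a) > 0 for all a and Σ_a π(a) = 1, if π ≠ π* then L(π) > L(π*), where L(π) = −(1/|𝒜|²) · Σ_{(a,b)∈𝒜×𝒜} σ(β(Q(a) − Q(b))) · log σ(α(log π(a) − log π(b))). -/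
open Finset

/-- The logistic (sigmoid) function σ(z) = 1/(1+e^{-z}). -/
noncomputable def sigmoid (z : ℝ) : ℝ := 1 / (1 + Real.exp (-z))

/-- The (ordered-pair) preference loss
L(π) = −(1/|𝒜|²) · Σ_{(a,b)} σ(β(Q a − Q b)) · log σ(α(log π a − log π b)). -/
noncomputable def prefLoss {A : Type*} [Fintype A] (α β : ℝ) (Q : A → ℝ) (π : A → ℝ) : ℝ :=
  -(1 / ((Fintype.card A : ℝ) ^ 2)) *
    ∑ a : A, ∑ b : A,
      sigmoid (β * (Q a - Q b)) * Real.log (sigmoid (α * (Real.log (π a) - Real.log (π b))))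

/-!
Group the ordered pairs `(a, b)` and `(b, a)`: with `p = σ(β(Q a − Q b))` and
`q = σ(α(log π a − log π b))`, the two terms form the binary cross entropy
`-(p log q + (1 - p) log (1 - q))`, since `σ(-z) = 1 - σ z`. By Gibbs' inequality (strict
concavity of `log`) each pair is minimised exactly at `q = p`. The Gibbs distribution achieves
`q = p` for every pair, and any other positive probability vector `π` has some pair with a different
log-ratio, hence with `q ≠ p` by injectivity of `σ`.
-/

lemma sigmoid_eq_real_sigmoid : sigmoid = Real.sigmoid :=
  funext fun _ => one_div _

section

open Real

lemma mul_log_add_one_sub_mul_log_lt {p q : ℝ} (hp₀ : 0 < p) (hp₁ : p < 1) (hq₀ : 0 < q)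
    (hq₁ : q < 1) (hne : q ≠ p) :
    p * log q + (1 - p) * log (1 - q) < p * log p + (1 - p) * log (1 - p) := by
  have hp₁' : 0 < 1 - p := sub_pos.mpr hp₁
  have hq₁' : 0 < 1 - q := sub_pos.mpr hq₁
  have hratio : q / p ≠ (1 - q) / (1 - p) := by
    rw [ne_eq, div_eq_div_iff hp₀.ne' hp₁'.ne']
    intro h
    exact hne (by linarith)
  have hconc := strictConcaveOn_log_Ioi.2 (Set.mem_Ioi.mpr (div_pos hq₀ hp₀))
    (Set.mem_Ioi.mpr (div_pos hq₁' hp₁')) hratio hp₀ hp₁' (add_sub_cancel p 1)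
  have hmean : p • (q / p) + (1 - p) • ((1 - q) / (1 - p)) = 1 := by
    simp only [smul_eq_mul]
    field_simp
    ring
  rw [hmean, log_one, smul_eq_mul, smul_eq_mul, log_div hq₀.ne' hp₀.ne',
    log_div hq₁'.ne' hp₁'.ne'] at hconc
  linarith

lemma sum_sum_pos_of_add_swap {A : Type*} [Fintype A] (F : A → A → ℝ)
    (hnonneg : ∀ a b, 0 ≤ F a b + F b a) (hpos : ∃ a b, 0 < F a b + F b a) :
    0 < ∑ a, ∑ b, F a b := by
  obtain ⟨a₀, b₀, hab⟩ := hpos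
  have hsymm : ∑ a, ∑ b, (F a b + F b a) = 2 * ∑ a, ∑ b, F a b := by
    simp only [sum_add_distrib]
    rw [sum_comm (f := fun a b => F b a)]
    ring
  have : 0 < ∑ x : A × A, (F x.1 x.2 + F x.2 x.1) :=
    sum_pos' (fun x _ => hnonneg x.1 x.2) ⟨(a₀, b₀), mem_univ _, hab⟩
  rw [Fintype.sum_prod_type, hsymm] at this
  linarith

lemma sum_sigmoid_mul_log_sigmoid_lt {A : Type*} [Fintype A] (u v : A → ℝ)
    (hne : ∃ a b, v a - v b ≠ u a - u b) :
    ∑ a, ∑ b, Real.sigmoid (u a - u b) * log (Real.sigmoid (v a - v b)) <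
      ∑ a, ∑ b, Real.sigmoid (u a - u b) * log (Real.sigmoid (u a - u b)) := by
  have hswap (w : A → ℝ) (a b : A) : Real.sigmoid (w b - w a) = 1 - Real.sigmoid (w a - w b) := by
    rw [← neg_sub, Real.sigmoid_neg]
  let F a b := Real.sigmoid (u a - u b) * log (Real.sigmoid (u a - u b)) -
    Real.sigmoid (u a - u b) * log (Real.sigmoid (v a - v b))
  have hpair (a b : A) : F a b + F b a =
      (Real.sigmoid (u a - u b) * log (Real.sigmoid (u a - u b)) +
        (1 - Real.sigmoid (u a - u b)) * log (1 - Real.sigmoid (u a - u b))) -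
      (Real.sigmoid (u a - u b) * log (Real.sigmoid (v a - v b)) +
        (1 - Real.sigmoid (u a - u b)) * log (1 - Real.sigmoid (v a - v b))) := by
    simp only [F, hswap u a b, hswap v a b]
    ring
  have hgibbs {a b : A} (h : v a - v b ≠ u a - u b) := mul_log_add_one_sub_mul_log_lt
    (Real.sigmoid_pos (u a - u b)) (Real.sigmoid_lt_one _) (Real.sigmoid_pos (v a - v b))
    (Real.sigmoid_lt_one _) (Real.sigmoid_injective.ne h)
  have hF : 0 < ∑ a, ∑ b, F a b := by
    refine sum_sum_pos_of_add_swap F (fun a b => ?_) ?_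
    · rw [hpair, sub_nonneg]
      by_cases h : v a - v b = u a - u b
      · rw [h]
      · exact (hgibbs h).le
    · obtain ⟨a, b, h⟩ := hne
      exact ⟨a, b, by rw [hpair, sub_pos]; exact hgibbs h⟩
  simpa only [F, sum_sub_distrib, sub_pos] using hF

lemma eq_of_forall_log_sub_log_eq {A : Type*} [Fintype A] {p q : A → ℝ} (hp : ∀ a, 0 < p a)
    (hq : ∀ a, 0 < q a) (hp₁ : ∑ a, p a = 1) (hq₁ : ∑ a, q a = 1)
    (h : ∀ a b, log (p a) - log (p b) = log (q a) - log (q b)) : p = q := by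
  funext a
  have hcross (b : A) : p a * q b = q a * p b := by
    refine log_injOn_pos (mul_pos (hp a) (hq b)) (mul_pos (hq a) (hp b)) ?_
    rw [log_mul (hp a).ne' (hq b).ne', log_mul (hq a).ne' (hp b).ne']
    linarith [h a b]
  calc p a = ∑ b, p a * q b := by rw [← mul_sum, hq₁, mul_one]
    _ = ∑ b, q a * p b := sum_congr rfl fun b _ => hcross b
    _ = q a := by rw [← mul_sum, hp₁, mul_one]

noncomputable def gibbs {A : Type*} [Fintype A] (c : ℝ) (Q : A → ℝ) (a : A) : ℝ :=
  exp (c * Q a) / ∑ a', exp (c * Q a')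

section gibbs

variable {A : Type*} [Fintype A] [Nonempty A] (c : ℝ) (Q : A → ℝ)

lemma sum_exp_pos : 0 < ∑ a, exp (c * Q a) :=
  sum_pos (fun _ _ => exp_pos _) univ_nonempty

lemma gibbs_pos (a : A) : 0 < gibbs c Q a :=
  div_pos (exp_pos _) (sum_exp_pos c Q)

lemma sum_gibbs : ∑ a, gibbs c Q a = 1 := by
  simp only [gibbs, ← sum_div]
  exact div_self (sum_exp_pos c Q).ne'

lemma log_gibbs_sub_log_gibbs (a b : A) :
    log (gibbs c Q a) - log (gibbs c Q b) = c * Q a - c * Q b := by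
  simp only [gibbs]
  rw [log_div (exp_pos _).ne' (sum_exp_pos c Q).ne', log_div (exp_pos _).ne'
    (sum_exp_pos c Q).ne', log_exp, log_exp]
  ring

end gibbs

end

theorem stmt_0_general {A : Type*} [Fintype A]
    (Q : A → ℝ) (α β : ℝ) (hα : 0 < α)
    (πStar : A → ℝ)
    (hπStar : πStar = fun a => Real.exp ((β / α) * Q a) / ∑ a' : A, Real.exp ((β / α) * Q a')) :
    ∀ π : A → ℝ, (∀ a, 0 < π a) → (∑ a : A, π a = 1) → π ≠ πStar →
      prefLoss α β Q πStar < prefLoss α β Q π := by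
  intro π hπ hπ₁ hne
  obtain rfl : πStar = gibbs (β / α) Q := hπStar
  have : Nonempty A := by
    by_contra h
    exact hne (funext fun a => (h ⟨a⟩).elim)
  have hstar (a b : A) : α * Real.log (gibbs (β / α) Q a) - α * Real.log (gibbs (β / α) Q b) =
      β * Q a - β * Q b := by
    rw [← mul_sub, log_gibbs_sub_log_gibbs]
    field_simp
  have hdiff : ∃ a b, α * Real.log (π a) - α * Real.log (π b) ≠ β * Q a - β * Q b := by
    by_contra! h
    refine hne (eq_of_forall_log_sub_log_eq hπ (gibbs_pos _ Q) hπ₁ (sum_gibbs _ Q) fun a b => ?_)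
    rw [← mul_right_inj' hα.ne', mul_sub, mul_sub, h, hstar]
  have hlt := sum_sigmoid_mul_log_sigmoid_lt (fun a => β * Q a) (fun a => α * Real.log (π a)) hdiff
  have hcard : (0 : ℝ) < 1 / (Fintype.card A : ℝ) ^ 2 := by positivity
  simp only [prefLoss, sigmoid_eq_real_sigmoid, mul_sub, hstar, neg_mul, neg_lt_neg_iff]
  exact mul_lt_mul_of_pos_left hlt hcard

/-- the Gibbs distribution π*(a) = exp((β/α)Q(a))/Σ exp((β/α)Q(a'))
uniquely minimizes the preference loss over full-support probability distributions. -/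
theorem stmt_0 {A : Type*} [Fintype A] (hA : 2 ≤ Fintype.card A)
    (Q : A → ℝ) (α β : ℝ) (hα : 0 < α) (hβ : 0 < β)
    (πStar : A → ℝ)
    (hπStar : πStar = fun a => Real.exp ((β / α) * Q a) / ∑ a' : A, Real.exp ((β / α) * Q a')) :
    ∀ π : A → ℝ, (∀ a, 0 < π a) → (∑ a : A, π a = 1) → π ≠ πStar →
      prefLoss α β Q πStar < prefLoss α β Q π :=
  stmt_0_general Q α β hα πStar hπStar
end

section
/- For every ℓ : 𝒜 → ℝ and every k ∈ 𝒜, the partial derivative of the unordered-pair preference loss L_p with respect to the coordinate ℓ(k) exists and equals −(α/|𝒜|²) · Σ_{b ≠ k} [ P*_{kb} − σ(α(ℓ(k) − ℓ(b))) ]. -/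
open Finset

/-- Bradley–Terry target probability P*_{ab} = σ(β(Q a − Q b)). -/
noncomputable def Pstar {A : Type*} (β : ℝ) (Q : A → ℝ) (a b : A) : ℝ :=
  sigmoid (β * (Q a - Q b))

/-- Model probability P_{ab}(ℓ) = σ(α(ℓ a − ℓ b)). -/
noncomputable def Pmod {A : Type*} (α : ℝ) (ℓ : A → ℝ) (a b : A) : ℝ :=
  sigmoid (α * (ℓ a - ℓ b))

/-- Unordered-pair (distinct-pair) preference loss L_p(ℓ). -/
noncomputable def lossP {A : Type*} [Fintype A] [DecidableEq A] (α β : ℝ) (Q : A → ℝ)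
    (ℓ : A → ℝ) : ℝ :=
  -(1 / ((Fintype.card A : ℝ) ^ 2)) *
    ∑ a : A, ∑ b ∈ Finset.univ.filter (fun b => b ≠ a),
      Pstar β Q a b * Real.log (Pmod α ℓ a b)

lemma hasDerivAt_log_sigmoid (z : ℝ) :
    HasDerivAt (fun z => Real.log (sigmoid z)) (1 - sigmoid z) z := by
  rw [sigmoid_eq_real_sigmoid]
  convert (Real.hasDerivAt_sigmoid z).log (Real.sigmoid_pos z).ne' using 1
  field_simp [(Real.sigmoid_pos z).ne']

section Pairs

variable {A : Type*}

lemma Pmod_swap (α : ℝ) (ℓ : A → ℝ) (a b : A) : Pmod α ℓ b a = 1 - Pmod α ℓ a b := by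
  rw [Pmod, Pmod, sigmoid_eq_real_sigmoid, ← Real.sigmoid_neg]
  ring_nf

lemma Pstar_swap (β : ℝ) (Q : A → ℝ) (a b : A) : Pstar β Q b a = 1 - Pstar β Q a b :=
  Pmod_swap β Q a b

lemma HasDerivAt.log_Pmod {f : ℝ → A → ℝ} {f' : A → ℝ} {x : ℝ} (hf : HasDerivAt f f' x)
    (α : ℝ) (a b : A) :
    HasDerivAt (fun t => Real.log (Pmod α (f t) a b))
      ((1 - Pmod α (f x) a b) * (α * (f' a - f' b))) x := by
  have hdiff : HasDerivAt (fun t => α * (f t a - f t b)) (α * (f' a - f' b)) x :=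
    ((hasDerivAt_pi.mp hf a).sub (hasDerivAt_pi.mp hf b)).const_mul α
  exact (hasDerivAt_log_sigmoid _).comp x hdiff

end Pairs

lemma sum_sum_ne_eq_sum_ne_of_eq_zero {A M : Type*} [Fintype A] [DecidableEq A]
    [AddCommMonoid M] (D : A → A → M) (k : A) (hD : ∀ a b, a ≠ k → b ≠ k → D a b = 0) :
    ∑ a, ∑ b ∈ univ.filter (· ≠ a), D a b = ∑ b ∈ univ.filter (· ≠ k), (D k b + D b k) := by
  simp only [filter_ne']
  have hrow : ∀ a ∈ univ.erase k, ∑ b ∈ univ.erase a, D a b = D a k := fun a ha =>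
    sum_eq_single_of_mem k (mem_erase.mpr ⟨fun h => (ne_of_mem_erase ha) h.symm, mem_univ k⟩)
      fun b _ hb => hD a b (ne_of_mem_erase ha) hb
  rw [← add_sum_erase univ _ (mem_univ k), sum_congr rfl hrow, sum_add_distrib]

lemma hasDerivAt_lossP_comp {A : Type*} [Fintype A] [DecidableEq A] {f : ℝ → A → ℝ} {f' : A → ℝ}
    {x : ℝ} (hf : HasDerivAt f f' x) (α β : ℝ) (Q : A → ℝ) :
    HasDerivAt (fun t => lossP α β Q (f t))
      (-(1 / (Fintype.card A : ℝ) ^ 2) * ∑ a, ∑ b ∈ univ.filter (· ≠ a),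
        Pstar β Q a b * ((1 - Pmod α (f x) a b) * (α * (f' a - f' b)))) x :=
  (HasDerivAt.fun_sum fun a _ => HasDerivAt.fun_sum fun b _ =>
    (hf.log_Pmod α a b).const_mul (Pstar β Q a b)).const_mul _

theorem stmt_4_general {A : Type*} [Fintype A] [DecidableEq A]
    (Q : A → ℝ) (α β : ℝ) (ℓ : A → ℝ) (k : A) :
    HasDerivAt (fun t : ℝ => lossP α β Q (Function.update ℓ k t))
      (-(α / ((Fintype.card A : ℝ) ^ 2)) *
        ∑ b ∈ Finset.univ.filter (fun b => b ≠ k),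
          (Pstar β Q k b - sigmoid (α * (ℓ k - ℓ b))))
      (ℓ k) := by
  have hderiv := hasDerivAt_lossP_comp (hasDerivAt_update ℓ k (ℓ k)) α β Q
  rw [Function.update_eq_self,
    sum_sum_ne_eq_sum_ne_of_eq_zero _ k fun a b ha hb => by simp [ha, hb]] at hderiv
  convert hderiv using 1
  rw [mul_sum, mul_sum]
  refine sum_congr rfl fun b hb => ?_
  have hbk : b ≠ k := (mem_filter.mp hb).2
  rw [Pstar_swap β Q k b, Pmod_swap α ℓ k b]
  simp only [Pmod, Pi.single_eq_same, Pi.single_eq_of_ne hbk]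
  ring

/-- the partial derivative of L_p with respect to the coordinate ℓ(k) exists
and equals −(α/|𝒜|²) · Σ_{b ≠ k} [ P*_{kb} − σ(α(ℓ(k) − ℓ(b))) ]. -/
theorem stmt_4 {A : Type*} [Fintype A] [DecidableEq A] (hA : 2 ≤ Fintype.card A)
    (Q : A → ℝ) (α β : ℝ) (hα : 0 < α) (hβ : 0 < β) (ℓ : A → ℝ) (k : A) :
    HasDerivAt (fun t : ℝ => lossP α β Q (Function.update ℓ k t))
      (-(α / ((Fintype.card A : ℝ) ^ 2)) *
        ∑ b ∈ Finset.univ.filter (fun b => b ≠ k),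
          (Pstar β Q k b - sigmoid (α * (ℓ k - ℓ b))))
      (ℓ k) :=
  stmt_4_general Q α β ℓ k
end

section
/- Suppose ℓ : 𝒜 → ℝ satisfies Σ_a e^{ℓ(a)} = 1 and there is a Lagrange multiplier λ ∈ ℝ such that for every k ∈ 𝒜 the KKT stationarity condition holds: −(α/|𝒜|²) · Σ_{b ≠ k} [ P*_{kb} − P_{kb}(ℓ) ] + λ·e^{ℓ(k)} = 0. Then λ = 0. -/
open Finset

lemma sigmoid_add_neg (z : ℝ) : sigmoid z + sigmoid (-z) = 1 := by
  unfold sigmoid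
  have h1 : (0:ℝ) < 1 + Real.exp (-z) := by positivity
  have h2 : (0:ℝ) < 1 + Real.exp z := by positivity
  have hz : Real.exp (-z) * Real.exp z = 1 := by
    rw [← Real.exp_add]; simp
  field_simp
  nlinarith [hz]

lemma antisym {A : Type*} (α β : ℝ) (Q : A → ℝ) (ℓ : A → ℝ) (a b : A) :
    (Pstar β Q a b - Pmod α ℓ a b) + (Pstar β Q b a - Pmod α ℓ b a) = 0 := by
  unfold Pstar Pmod
  have h1 := sigmoid_add_neg (β * (Q a - Q b))
  have h2 := sigmoid_add_neg (α * (ℓ a - ℓ b))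
  have e1 : β * (Q b - Q a) = -(β * (Q a - Q b)) := by ring
  have e2 : α * (ℓ b - ℓ a) = -(α * (ℓ a - ℓ b)) := by ring
  rw [e1, e2]; linarith

/-- under the normalization Σ_a e^{ℓ(a)} = 1, any Lagrange multiplier λ
satisfying the KKT stationarity conditions must vanish. -/
theorem stmt_6 {A : Type*} [Fintype A] [DecidableEq A] (hA : 2 ≤ Fintype.card A)
    (Q : A → ℝ) (α β : ℝ) (hα : 0 < α) (hβ : 0 < β) (ℓ : A → ℝ) (lam : ℝ)
    (hnorm : ∑ a : A, Real.exp (ℓ a) = 1)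
    (hKKT : ∀ k : A,
      -(α / ((Fintype.card A : ℝ) ^ 2)) *
          (∑ b ∈ Finset.univ.filter (fun b => b ≠ k), (Pstar β Q k b - Pmod α ℓ k b))
        + lam * Real.exp (ℓ k) = 0) :
    lam = 0 := by
  set f : A → A → ℝ := fun a b => Pstar β Q a b - Pmod α ℓ a b with hf
  have hsum : ∑ k : A, (-(α / ((Fintype.card A : ℝ) ^ 2)) *
      (∑ b ∈ Finset.univ.filter (fun b => b ≠ k), f k b)
      + lam * Real.exp (ℓ k)) = 0 := by
    rw [Finset.sum_eq_zero]; intro k _; exact hKKT k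
  have hS : ∑ k : A, ∑ b ∈ Finset.univ.filter (fun b => b ≠ k), f k b = 0 := by
    have hswap : ∑ k : A, ∑ b ∈ Finset.univ.filter (fun b => b ≠ k), f k b
        = ∑ k : A, ∑ b ∈ Finset.univ.filter (fun b => b ≠ k), f b k := by
      rw [Finset.sum_sigma', Finset.sum_sigma']
      apply Finset.sum_nbij' (fun p => ⟨p.2, p.1⟩) (fun p => ⟨p.2, p.1⟩) <;>
        simp [eq_comm] <;> tauto
    have hneg : ∀ a b : A, f b a = -f a b := by
      intro a b
      have := antisym α β Q ℓ a b
      simp only [hf] at *; linarith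
    have : ∑ k : A, ∑ b ∈ Finset.univ.filter (fun b => b ≠ k), f k b
        = -∑ k : A, ∑ b ∈ Finset.univ.filter (fun b => b ≠ k), f k b := by
      nth_rewrite 1 [hswap]
      rw [← Finset.sum_neg_distrib]
      apply Finset.sum_congr rfl
      intro k _
      rw [← Finset.sum_neg_distrib]
      exact Finset.sum_congr rfl fun b _ => hneg k b
    linarith
  rw [Finset.sum_add_distrib, ← Finset.mul_sum, ← Finset.mul_sum, hS, hnorm] at hsum
  simpa using hsum
end

section
/- Suppose ℓ : 𝒜 → ℝ satisfies, for every k ∈ 𝒜, the stationarity condition Σ_{b ≠ k} [ P_{kb}(ℓ) − P*_{kb} ] = 0. Then the pairwise preference probabilities match exactly: P_{kj}(ℓ) = P*_{kj} for all k, j ∈ 𝒜. -/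
open Finset

lemma sigmoid_strictMono : StrictMono sigmoid := by
  intro a b hab
  unfold sigmoid
  have h1 : (0:ℝ) < 1 + Real.exp (-b) := by positivity
  have h2 : 1 + Real.exp (-b) < 1 + Real.exp (-a) := by
    have := Real.exp_lt_exp.mpr (neg_lt_neg hab)
    linarith
  exact one_div_lt_one_div_of_lt h1 h2

/-- if for every k the stationarity condition Σ_{b ≠ k} [P_{kb}(ℓ) − P*_{kb}] = 0
holds, then P_{kj}(ℓ) = P*_{kj} for all k, j. -/
theorem stmt_7 {A : Type*} [Fintype A] [DecidableEq A] (hA : 2 ≤ Fintype.card A)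
    (Q : A → ℝ) (α β : ℝ) (hα : 0 < α) (hβ : 0 < β) (ℓ : A → ℝ)
    (hstat : ∀ k : A,
      ∑ b ∈ Finset.univ.filter (fun b => b ≠ k), (Pmod α ℓ k b - Pstar β Q k b) = 0) :
    ∀ k j : A, Pmod α ℓ k j = Pstar β Q k j := by
  have hne : Nonempty A := Fintype.card_pos_iff.mp (by omega)
  set g : A → ℝ := fun b => α * ℓ b - β * Q b with hg
  -- pick a maximizer of g
  obtain ⟨m, -, hm⟩ := Finset.exists_max_image Finset.univ g ⟨Classical.arbitrary A,
    Finset.mem_univ _⟩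
  -- each term in the stationarity sum at m is nonneg
  have hnonneg : ∀ b ∈ Finset.univ.filter (fun b => b ≠ m),
      0 ≤ Pmod α ℓ m b - Pstar β Q m b := by
    intro b _
    have hgb : g b ≤ g m := hm b (Finset.mem_univ b)
    have harg : β * (Q m - Q b) ≤ α * (ℓ m - ℓ b) := by
      simp only [hg] at hgb; ring_nf; ring_nf at hgb; linarith
    have := sigmoid_strictMono.monotone harg
    simpa [Pmod, Pstar] using this
  have hzero := (Finset.sum_eq_zero_iff_of_nonneg hnonneg).mp (hstat m)
  -- g is constant
  have hconst : ∀ b : A, g b = g m := by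
    intro b
    by_cases hb : b = m
    · rw [hb]
    · have hz := hzero b (by simp [hb])
      have heq : sigmoid (α * (ℓ m - ℓ b)) = sigmoid (β * (Q m - Q b)) := by
        have : Pmod α ℓ m b = Pstar β Q m b := by linarith
        simpa [Pmod, Pstar] using this
      have := sigmoid_strictMono.injective heq
      simp only [hg]; nlinarith [this]
  intro k j
  have h1 : g k = g j := by rw [hconst k, hconst j]
  have : α * (ℓ k - ℓ j) = β * (Q k - Q j) := by
    simp only [hg] at h1; nlinarith [h1]
  simp [Pmod, Pstar, this]
end

section
/- Let w : 𝒜 × 𝒜 → ℝ be symmetric with w(i,j) > 0 for all i ≠ j, let ℓ : 𝒜 → ℝ, and let v : 𝒜 → ℝ be a nonzero vector in the tangent space of the constraint Σ_a e^{ℓ(a)} = 1, i.e., Σ_a e^{ℓ(a)}·v(a) = 0 and v ≠ 0. Then the Laplacian quadratic form is strictly positive: (1/2)·Σ_{i≠j} w(i,j)·(v(i) − v(j))² > 0. In particular, the Hessian of the preference loss is positive definite along all feasible directions, so the preference loss is strictly convex on the set of full-support normalized log-policies. -/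
open Finset

/-- for symmetric positive weights w, the graph-Laplacian quadratic form
(1/2)·Σ_{i≠j} w(i,j)·(v(i) − v(j))² is strictly positive for every nonzero vector v in the
tangent space of the normalization constraint Σ_a e^{ℓ(a)} = 1 (i.e. Σ_a e^{ℓ(a)}·v(a) = 0);
hence the Hessian of the preference loss is positive definite along all feasible directions
and the loss is strictly convex on the set of full-support normalized log-policies. -/
theorem stmt_11 {A : Type*} [Fintype A] [DecidableEq A] (hA : 2 ≤ Fintype.card A)
    (w : A → A → ℝ) (hsymm : ∀ i j : A, w i j = w j i)
    (hpos : ∀ i j : A, i ≠ j → 0 < w i j)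
    (ℓ : A → ℝ) (hnorm : ∑ a : A, Real.exp (ℓ a) = 1)
    (v : A → ℝ) (hv : v ≠ 0)
    (htangent : ∑ a : A, Real.exp (ℓ a) * v a = 0) :
    0 < (1 / 2) * ∑ i : A, ∑ j ∈ Finset.univ.filter (fun j => j ≠ i),
      w i j * (v i - v j) ^ 2 := by
  -- v is not constant: otherwise v = c with c·1 = 0 from tangent, so v = 0
  have hnc : ∃ i j : A, v i ≠ v j := by
    by_contra h
    push_neg at h
    obtain ⟨a⟩ := Fintype.card_pos_iff.mp (by omega : 0 < Fintype.card A)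
    have hva : v a = 0 := by
      have : ∑ b : A, Real.exp (ℓ b) * v b = (∑ b : A, Real.exp (ℓ b)) * v a := by
        rw [Finset.sum_mul]
        exact Finset.sum_congr rfl fun b _ => by rw [h b a]
      rw [this, hnorm, one_mul] at htangent
      exact htangent
    exact hv (funext fun b => by simp [h b a, hva])
  obtain ⟨i, j, hij⟩ := hnc
  have hne : j ≠ i := fun e => hij (by rw [e])
  have key : 0 < ∑ i : A, ∑ j ∈ Finset.univ.filter (fun j => j ≠ i),
      w i j * (v i - v j) ^ 2 := by
    have hterm : ∀ a ∈ (Finset.univ : Finset A),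
        0 ≤ ∑ b ∈ Finset.univ.filter (fun b => b ≠ a), w a b * (v a - v b) ^ 2 :=
      fun a _ => Finset.sum_nonneg fun b hb =>
        mul_nonneg (le_of_lt (hpos a b (Ne.symm (Finset.mem_filter.mp hb).2))) (sq_nonneg _)
    refine Finset.sum_pos' hterm ⟨i, Finset.mem_univ i, ?_⟩
    refine Finset.sum_pos' (fun b hb => mul_nonneg
      (le_of_lt (hpos i b (Ne.symm (Finset.mem_filter.mp hb).2))) (sq_nonneg _))
      ⟨j, Finset.mem_filter.mpr ⟨Finset.mem_univ j, hne⟩, ?_⟩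
    exact mul_pos (hpos i j (Ne.symm hne)) (by have := sub_ne_zero.mpr hij; positivity)
  linarith
end

section
/- Let ℓ* : 𝒜 → ℝ be defined by ℓ*(a) = (β/α)·Q(a) − log( Σ_{a'} exp((β/α)·Q(a')) ). Then ℓ* is a normalized log-policy (Σ_a e^{ℓ*(a)} = 1) and is a stationary point of the unordered-pair preference loss: for every k ∈ 𝒜, Σ_{b ≠ k} [ P*_{kb} − P_{kb}(ℓ*) ] = 0; indeed P_{ab}(ℓ*) = P*_{ab} for all a, b ∈ 𝒜. -/
open Finset

/-- ℓ*(a) = (β/α)·Q(a) − log(Σ_{a'} exp((β/α)·Q(a'))) is a normalized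
log-policy and a stationary point of the unordered-pair preference loss; indeed
P_{ab}(ℓ*) = P*_{ab} for all a, b. -/
theorem stmt_12 {A : Type*} [Fintype A] [DecidableEq A] (hA : 2 ≤ Fintype.card A)
    (Q : A → ℝ) (α β : ℝ) (hα : 0 < α) (hβ : 0 < β)
    (ℓStar : A → ℝ)
    (hℓStar : ℓStar = fun a =>
      (β / α) * Q a - Real.log (∑ a' : A, Real.exp ((β / α) * Q a'))) :
    (∑ a : A, Real.exp (ℓStar a) = 1) ∧
    (∀ k : A, ∑ b ∈ Finset.univ.filter (fun b => b ≠ k),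
        (Pstar β Q k b - Pmod α ℓStar k b) = 0) ∧
    (∀ a b : A, Pmod α ℓStar a b = Pstar β Q a b) := by
  have hcard : Nonempty A := Fintype.card_pos_iff.mp (by omega)
  set S : ℝ := ∑ a' : A, Real.exp ((β / α) * Q a') with hS
  have hSpos : 0 < S := Finset.sum_pos (fun i _ => Real.exp_pos _) (Finset.univ_nonempty)
  have hmod : ∀ a b : A, Pmod α ℓStar a b = Pstar β Q a b := by
    intro a b
    simp only [Pmod, Pstar, hℓStar]
    congr 1
    field_simp
    ring
  refine ⟨?_, fun k => ?_, hmod⟩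
  · have : ∀ a : A, Real.exp (ℓStar a) = Real.exp ((β / α) * Q a) / S := by
      intro a
      rw [hℓStar]
      simp [Real.exp_sub, Real.exp_log hSpos]
    rw [Finset.sum_congr rfl (fun a _ => this a), ← Finset.sum_div]
    field_simp
    rw [hS]
    exact Finset.sum_congr rfl (fun a _ => by ring_nf)
  · apply Finset.sum_eq_zero
    intro b _
    rw [hmod]
    ring
end

section
/- Suppose ℓ, ℓ' : 𝒜 → ℝ both satisfy Σ_a e^{ℓ(a)} = 1 and Σ_a e^{ℓ'(a)} = 1, and both satisfy the stationarity system of the unordered-pair preference loss: for every k ∈ 𝒜, Σ_{b ≠ k} [ P_{kb}(ℓ) − P*_{kb} ] = 0 and Σ_{b ≠ k} [ P_{kb}(ℓ') − P*_{kb} ] = 0. Then ℓ = ℓ', i.e., the stationary point of the constrained preference-loss minimization is unique. -/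
/-!
At a coordinate `k` where `ℓ - ℓ'` is maximal, every gap `ℓ k - ℓ b` dominates `ℓ' k - ℓ' b`,
so by strict monotonicity of the sigmoid each term of the `k`-th stationarity equation for `ℓ`
dominates the corresponding term for `ℓ'`. The two sums are equal, hence so are all terms, and
`ℓ - ℓ'` is constant. The normalization `∑ exp = 1` then forces that constant to vanish.
-/

open Finset

lemma sub_eq_of_sum_comp_sub_eq_of_isMax {ι : Type*} {f : ℝ → ℝ} (hf : StrictMono f)
    {u v : ι → ℝ} {k : ι} (hk : ∀ b, u b - v b ≤ u k - v k) {s : Finset ι}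
    (hs : ∑ b ∈ s, f (u k - u b) = ∑ b ∈ s, f (v k - v b)) :
    ∀ b ∈ s, u b - v b = u k - v k := by
  have hle : ∀ b ∈ s, f (v k - v b) ≤ f (u k - u b) := fun b _ =>
    hf.monotone (by linarith [hk b])
  intro b hb
  have hfb := ((sum_eq_sum_iff_of_le hle).mp hs.symm) b hb
  linarith [hf.injective hfb]

lemma eq_zero_of_sum_exp_add_const {ι : Type*} [Fintype ι] {u v : ι → ℝ} {c : ℝ}
    (huv : ∀ a, u a = v a + c) (hu : ∑ a, Real.exp (u a) = 1) (hv : ∑ a, Real.exp (v a) = 1) :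
    c = 0 := by
  have hscale : ∑ a, Real.exp (u a) = Real.exp c * ∑ a, Real.exp (v a) := by
    simp only [huv, Real.exp_add, mul_sum, mul_comm]
  rw [hu, hv, mul_one] at hscale
  exact Real.exp_eq_one_iff c |>.mp hscale.symm

theorem stmt_17_general {A : Type*} [Fintype A] [DecidableEq A]
    (Q : A → ℝ) (α β : ℝ) (hα : 0 < α) (ℓ ℓ' : A → ℝ)
    (hnorm : ∑ a : A, Real.exp (ℓ a) = 1)
    (hnorm' : ∑ a : A, Real.exp (ℓ' a) = 1)
    (hstat : ∀ k : A,
      ∑ b ∈ Finset.univ.filter (fun b => b ≠ k), (Pmod α ℓ k b - Pstar β Q k b) = 0)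
    (hstat' : ∀ k : A,
      ∑ b ∈ Finset.univ.filter (fun b => b ≠ k), (Pmod α ℓ' k b - Pstar β Q k b) = 0) :
    ℓ = ℓ' := by
  rcases isEmpty_or_nonempty A with hA | hA
  · exact funext isEmptyElim
  obtain ⟨k, -, hk⟩ := exists_max_image univ (fun a => ℓ a - ℓ' a) univ_nonempty
  have hsum : ∑ b ∈ univ.filter (· ≠ k), sigmoid (α * (ℓ k - ℓ b)) =
      ∑ b ∈ univ.filter (· ≠ k), sigmoid (α * (ℓ' k - ℓ' b)) := by
    have h := hstat k
    rwa [← hstat' k, sum_sub_distrib, sum_sub_distrib, sub_left_inj] at h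
  have hmono : StrictMono fun z => sigmoid (α * z) :=
    sigmoid_strictMono.comp (strictMono_mul_left_of_pos hα)
  have hconst : ∀ b, ℓ b = ℓ' b + (ℓ k - ℓ' k) := by
    intro b
    by_cases hbk : b = k
    · rw [hbk]; ring
    · have hb := sub_eq_of_sum_comp_sub_eq_of_isMax hmono (fun b => hk b (mem_univ b)) hsum b
        (by simpa using hbk)
      linarith
  have hzero := eq_zero_of_sum_exp_add_const hconst hnorm hnorm'
  funext a
  linarith [hconst a]

/-- two normalized log-policies both satisfying the stationarity system of
the unordered-pair preference loss coincide: the constrained stationary point is unique. -/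
theorem stmt_17 {A : Type*} [Fintype A] [DecidableEq A] (hA : 2 ≤ Fintype.card A)
    (Q : A → ℝ) (α β : ℝ) (hα : 0 < α) (hβ : 0 < β) (ℓ ℓ' : A → ℝ)
    (hnorm : ∑ a : A, Real.exp (ℓ a) = 1)
    (hnorm' : ∑ a : A, Real.exp (ℓ' a) = 1)
    (hstat : ∀ k : A,
      ∑ b ∈ Finset.univ.filter (fun b => b ≠ k), (Pmod α ℓ k b - Pstar β Q k b) = 0)
    (hstat' : ∀ k : A,
      ∑ b ∈ Finset.univ.filter (fun b => b ≠ k), (Pmod α ℓ' k b - Pstar β Q k b) = 0) :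
    ℓ = ℓ' :=
  stmt_17_general Q α β hα ℓ ℓ' hnorm hnorm' hstat hstat'
end
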